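/- arXiv:2305.18779 — 5 statements merged into one kernel-verified Lean document; each statement's English description precedes it below -/
import Mathlib

section
/- Let (X, 𝒜) be a measurable space, {m_x}_{x∈X} a family of probability measures on X, ρ_0, ρ_1 finite measures on X, and Ψ:[0,1]→[0,1] concave and non-decreasing. Define ProbPer_Ψ(A) := ∫_{Aᶜ} Ψ(m_x(A)) dρ_0(x) + ∫_A Ψ(m_x(Aᶜ)) dρ_1(x). Then ProbPer_Ψ is submodular: for all measurable A, B, ProbPer_Ψ(A∪B) + ProbPer_Ψ(A∩B) ≤ ProbPer_Ψ(A) + ProbPer_Ψ(B). -/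
/-!
Pointwise in `x`, the integrand `1_{Aᶜ}(x) Ψ(m_x(A))` of the `ρ₀`-part is submodular in `A`.
If `x ∉ A ∪ B` this is the two-point Karamata inequality
`Ψ(m_x(A ∪ B)) + Ψ(m_x(A ∩ B)) ≤ Ψ(m_x(A)) + Ψ(m_x(B))` for concave `Ψ`, since `m_x` is modular
and `m_x(A ∩ B) ≤ m_x(A) ≤ m_x(A ∪ B)`; if `x` lies in exactly one of `A`, `B` it is monotonicity
of `Ψ`. Integrating gives submodularity of the `ρ₀`-part. The `ρ₁`-part is the `ρ₀`-part evaluated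
at `Aᶜ`, and complementation exchanges unions and intersections.
-/

open MeasureTheory Set

theorem ConcaveOn.add_le_add_of_add_eq {s : Set ℝ} {f : ℝ → ℝ} (hf : ConcaveOn ℝ s f)
    {i a b u : ℝ} (hi : i ∈ s) (hu : u ∈ s) (ha : a ∈ Icc i u) (hsum : u + i = a + b) :
    f u + f i ≤ f a + f b := by
  obtain ⟨p, q, hp, hq, hpq, rfl⟩ := (segment_eq_Icc (ha.1.trans ha.2)).symm ▸ ha
  have hb : b = q • i + p • u := by
    simp only [smul_eq_mul] at hsum ⊢
    linear_combination -hsum - (i + u) * hpq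
  have hfa := hf.2 hi hu hp hq hpq
  have hfb := hf.2 hi hu hq hp (by rw [add_comm, hpq])
  rw [← hb] at hfb
  simp only [smul_eq_mul] at hfa hfb
  linear_combination hfa + hfb - (f i + f u) * hpq

theorem MonotoneOn.measurable_comp {X α β : Type*} [MeasurableSpace X]
    [LinearOrder α] [TopologicalSpace α] [OrderClosedTopology α] [MeasurableSpace α]
    [BorelSpace α] [LinearOrder β] [TopologicalSpace β] [OrderTopology β]
    [SecondCountableTopology β] [MeasurableSpace β] [BorelSpace β] {s : Set α} {Ψ : α → β}
    (hΨ : MonotoneOn Ψ s) {f : X → α} (hf : Measurable f) (hfs : ∀ x, f x ∈ s) :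
    Measurable fun x => Ψ (f x) :=
  have : Monotone (s.domRestrict Ψ) := fun a b hab => hΨ a.2 b.2 hab
  this.measurable.comp (hf.subtype_mk (h := hfs))

theorem measureReal_mem_Icc {X : Type*} [MeasurableSpace X] {μ : Measure X}
    [IsZeroOrProbabilityMeasure μ] (S : Set X) : μ.real S ∈ Icc 0 1 :=
  ⟨measureReal_nonneg, measureReal_le_one⟩

section

variable {X : Type*} [MeasurableSpace X] {m : X → Measure X} [∀ x, IsProbabilityMeasure (m x)]
  {Ψ : ℝ → ℝ} {A B : Set X}

theorem indicator_compl_union_add_indicator_compl_inter_le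
    (hconc : ConcaveOn ℝ (Icc 0 1) Ψ) (hmono : MonotoneOn Ψ (Icc 0 1))
    (hB : MeasurableSet B) (x : X) :
    (A ∪ B)ᶜ.indicator (fun y => Ψ (m y (A ∪ B)).toReal) x
        + (A ∩ B)ᶜ.indicator (fun y => Ψ (m y (A ∩ B)).toReal) x
      ≤ Aᶜ.indicator (fun y => Ψ (m y A).toReal) x
        + Bᶜ.indicator (fun y => Ψ (m y B).toReal) x := by
  have hmem := measureReal_mem_Icc (μ := m x)
  by_cases hxA : x ∈ A <;> by_cases hxB : x ∈ B <;>
    simp only [indicator, compl_union, mem_inter_iff, mem_compl_iff, hxA, hxB, not_true_eq_false,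
      not_false_eq_true, and_self, and_true, and_false, ↓reduceIte, zero_add, add_zero, le_refl]
  · exact hmono (hmem _) (hmem _) (measureReal_mono inter_subset_right)
  · exact hmono (hmem _) (hmem _) (measureReal_mono inter_subset_left)
  · exact hconc.add_le_add_of_add_eq (hmem _) (hmem _)
      ⟨measureReal_mono inter_subset_left, measureReal_mono subset_union_left⟩
      (measureReal_union_add_inter hB)

theorem integrable_indicator_compl (μ : Measure X) [IsFiniteMeasure μ]
    (hmono : MonotoneOn Ψ (Icc 0 1))
    (hmeas : ∀ S : Set X, MeasurableSet S → Measurable fun x => (m x S).toReal)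
    {S : Set X} (hS : MeasurableSet S) :
    Integrable (Sᶜ.indicator fun x => Ψ (m x S).toReal) μ := by
  have hmem (x : X) := measureReal_mem_Icc (μ := m x) S
  have hbound (x : X) : Ψ (m x S).toReal ∈ Icc (Ψ 0) (Ψ 1) :=
    ⟨hmono (left_mem_Icc.2 zero_le_one) (hmem x) (hmem x).1,
      hmono (hmem x) (right_mem_Icc.2 zero_le_one) (hmem x).2⟩
  exact (Integrable.of_mem_Icc _ _ (hmono.measurable_comp (hmeas S hS) hmem).aemeasurable
    (ae_of_all _ hbound)).indicator hS.compl

theorem setIntegral_compl_union_add_setIntegral_compl_inter_le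
    (μ : Measure X) [IsFiniteMeasure μ]
    (hconc : ConcaveOn ℝ (Icc 0 1) Ψ) (hmono : MonotoneOn Ψ (Icc 0 1))
    (hmeas : ∀ S : Set X, MeasurableSet S → Measurable fun x => (m x S).toReal)
    (hA : MeasurableSet A) (hB : MeasurableSet B) :
    (∫ x in (A ∪ B)ᶜ, Ψ (m x (A ∪ B)).toReal ∂μ) + ∫ x in (A ∩ B)ᶜ, Ψ (m x (A ∩ B)).toReal ∂μ
      ≤ (∫ x in Aᶜ, Ψ (m x A).toReal ∂μ) + ∫ x in Bᶜ, Ψ (m x B).toReal ∂μ := by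
  have hint {S : Set X} (hS : MeasurableSet S) := integrable_indicator_compl μ hmono hmeas hS
  rw [← integral_indicator (hA.union hB).compl, ← integral_indicator (hA.inter hB).compl,
    ← integral_indicator hA.compl, ← integral_indicator hB.compl,
    ← integral_add (hint (hA.union hB)) (hint (hA.inter hB)),
    ← integral_add (hint hA) (hint hB)]
  exact integral_mono ((hint (hA.union hB)).add (hint (hA.inter hB))) ((hint hA).add (hint hB))
    (indicator_compl_union_add_indicator_compl_inter_le hconc hmono hB)

end

theorem stmt4_general {X : Type*} [MeasurableSpace X]
    (m : X → Measure X) (hm : ∀ x, IsProbabilityMeasure (m x))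
    (hmeas : ∀ S : Set X, MeasurableSet S → Measurable fun x => (m x S).toReal)
    (ρ₀ ρ₁ : Measure X) [IsFiniteMeasure ρ₀] [IsFiniteMeasure ρ₁]
    (Ψ : ℝ → ℝ)
    (hconc : ConcaveOn ℝ (Set.Icc (0:ℝ) 1) Ψ)
    (hmono : MonotoneOn Ψ (Set.Icc (0:ℝ) 1))
    (A B : Set X) (hA : MeasurableSet A) (hB : MeasurableSet B) :
    ((∫ x in (A ∪ B)ᶜ, Ψ ((m x (A ∪ B)).toReal) ∂ρ₀)
        + ∫ x in A ∪ B, Ψ ((m x (A ∪ B)ᶜ).toReal) ∂ρ₁)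
      + ((∫ x in (A ∩ B)ᶜ, Ψ ((m x (A ∩ B)).toReal) ∂ρ₀)
        + ∫ x in A ∩ B, Ψ ((m x (A ∩ B)ᶜ).toReal) ∂ρ₁)
    ≤ ((∫ x in Aᶜ, Ψ ((m x A).toReal) ∂ρ₀)
        + ∫ x in A, Ψ ((m x Aᶜ).toReal) ∂ρ₁)
      + ((∫ x in Bᶜ, Ψ ((m x B).toReal) ∂ρ₀)
        + ∫ x in B, Ψ ((m x Bᶜ).toReal) ∂ρ₁) := by
  have := hm
  have h₀ := setIntegral_compl_union_add_setIntegral_compl_inter_le ρ₀ hconc hmono hmeas hA hB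
  have h₁ := setIntegral_compl_union_add_setIntegral_compl_inter_le ρ₁ hconc hmono hmeas
    hA.compl hB.compl
  rw [← compl_inter, ← compl_union, compl_compl, compl_compl, compl_compl, compl_compl] at h₁
  linarith

theorem stmt4 {X : Type*} [MeasurableSpace X]
    (m : X → Measure X) (hm : ∀ x, IsProbabilityMeasure (m x))
    (hmeas : ∀ S : Set X, MeasurableSet S → Measurable fun x => (m x S).toReal)
    (ρ₀ ρ₁ : Measure X) [IsFiniteMeasure ρ₀] [IsFiniteMeasure ρ₁]
    (Ψ : ℝ → ℝ)
    (hconc : ConcaveOn ℝ (Set.Icc (0:ℝ) 1) Ψ)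
    (hmono : MonotoneOn Ψ (Set.Icc (0:ℝ) 1))
    (hrange : ∀ t ∈ Set.Icc (0:ℝ) 1, Ψ t ∈ Set.Icc (0:ℝ) 1)
    (A B : Set X) (hA : MeasurableSet A) (hB : MeasurableSet B) :
    ((∫ x in (A ∪ B)ᶜ, Ψ ((m x (A ∪ B)).toReal) ∂ρ₀)
        + ∫ x in A ∪ B, Ψ ((m x (A ∪ B)ᶜ).toReal) ∂ρ₁)
      + ((∫ x in (A ∩ B)ᶜ, Ψ ((m x (A ∩ B)).toReal) ∂ρ₀)
        + ∫ x in A ∩ B, Ψ ((m x (A ∩ B)ᶜ).toReal) ∂ρ₁)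
    ≤ ((∫ x in Aᶜ, Ψ ((m x A).toReal) ∂ρ₀)
        + ∫ x in A, Ψ ((m x Aᶜ).toReal) ∂ρ₁)
      + ((∫ x in Bᶜ, Ψ ((m x B).toReal) ∂ρ₀)
        + ∫ x in B, Ψ ((m x Bᶜ).toReal) ∂ρ₁) :=
  stmt4_general m hm hmeas ρ₀ ρ₁ Ψ hconc hmono A B hA hB
end

section
/- Let Ψ:[0,1]→[0,1] be concave and non-decreasing, let m be a probability measure on a measurable space X, and let u: X → [0,1] be measurable. Fix a point x with u(x) < 1. Then ∫_{u(x)}^1 Ψ( m({u ≥ t}) ) dt ≤ (1−u(x)) · Ψ( E_{x'∼m}[u(x')] ). -/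
open MeasureTheory

theorem stmt7 {X : Type*} [MeasurableSpace X]
    (m : Measure X) [IsProbabilityMeasure m]
    (u : X → ℝ) (hu : Measurable u) (hu01 : ∀ x, u x ∈ Set.Icc (0:ℝ) 1)
    (Ψ : ℝ → ℝ)
    (hconc : ConcaveOn ℝ (Set.Icc (0:ℝ) 1) Ψ)
    (hmono : MonotoneOn Ψ (Set.Icc (0:ℝ) 1))
    (hrange : ∀ t ∈ Set.Icc (0:ℝ) 1, Ψ t ∈ Set.Icc (0:ℝ) 1)
    (x : X) (hx : u x < 1) :
    (∫ t in (u x)..1, Ψ ((m {x' | t ≤ u x'}).toReal))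
      ≤ (1 - u x) * Ψ (∫ x', u x' ∂m) := by
  set c := u x with hc
  have hc0 : 0 ≤ c := (hu01 x).1
  have hc1 : c ≤ 1 := hx.le
  set g : ℝ → ℝ := fun t => (m {x' | t ≤ u x'}).toReal with hg
  set A : ℝ := ∫ x', u x' ∂m with hA
  -- basic facts
  have hganti : Antitone g := by
    intro t s hts
    exact ENNReal.toReal_mono (measure_ne_top m _)
      (measure_mono (fun a ha => le_trans hts ha))
  have hg01 : ∀ t, g t ∈ Set.Icc (0:ℝ) 1 := by
    intro t
    constructor
    · exact ENNReal.toReal_nonneg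
    · have h1 : m {x' | t ≤ u x'} ≤ 1 := prob_le_one
      simpa using ENNReal.toReal_mono (by simp) h1
  have huint : Integrable u m := by
    refine (integrable_const (1:ℝ)).mono' hu.aestronglyMeasurable ?_
    refine Filter.Eventually.of_forall fun a => ?_
    rw [Real.norm_eq_abs, abs_le]
    exact ⟨by linarith [(hu01 a).1], (hu01 a).2⟩
  have hA0 : 0 ≤ A := integral_nonneg fun a => (hu01 a).1
  have hA1 : A ≤ 1 := by
    have := integral_mono huint (integrable_const (1:ℝ)) (fun a => (hu01 a).2)
    simpa using this
  have hΨganti : Antitone fun t => Ψ (g t) := fun t s hts =>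
    hmono (hg01 s) (hg01 t) (hganti hts)
  -- Step 1: layer cake bound
  have key : ∫ t in c..1, g t ≤ (1 - c) * A := by
    set w : X → ℝ := fun a => max (u a - c) 0 with hw
    have hwmeas : Measurable w := (hu.sub measurable_const).max measurable_const
    have hwint : Integrable w m := by
      refine (integrable_const (1:ℝ)).mono' hwmeas.aestronglyMeasurable ?_
      refine Filter.Eventually.of_forall fun a => ?_
      rw [Real.norm_eq_abs, abs_le]
      constructor
      · exact le_trans (by norm_num) (le_max_right (u a - c) 0)
      · exact max_le (by linarith [(hu01 a).2]) (by norm_num)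
    have hwnn : (0:X → ℝ) ≤ᵐ[m] w := Filter.Eventually.of_forall fun a => le_max_right _ _
    have hwbdd : w ≤ᵐ[m] fun _ => (1 - c) := by
      refine Filter.Eventually.of_forall fun a => ?_
      show max (u a - c) 0 ≤ 1 - c
      exact max_le (by linarith [(hu01 a).2]) (by linarith)
    have layer := hwint.integral_eq_integral_Ioc_meas_le hwnn hwbdd
    have hsets : ∀ t ∈ Set.Ioc (0:ℝ) (1 - c),
        (m {a | t ≤ w a}).toReal = g (t + c) := by
      intro t ht
      have : {a | t ≤ w a} = {x' | t + c ≤ u x'} := by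
        ext a
        simp only [Set.mem_setOf_eq, hw, le_max_iff]
        constructor
        · rintro (h | h)
          · linarith
          · exact absurd ht.1 (by linarith)
        · intro h; left; linarith
      rw [this]
    have step : ∫ a, w a ∂m = ∫ t in c..1, g t := by
      rw [layer]
      simp only [measureReal_def]
      rw [setIntegral_congr_fun measurableSet_Ioc hsets]
      rw [← intervalIntegral.integral_of_le (by linarith : (0:ℝ) ≤ 1 - c)]
      rw [intervalIntegral.integral_comp_add_right g c]
      norm_num
    rw [← step]
    have hptwise : ∀ a, w a ≤ (1 - c) * u a := by
      intro a
      refine max_le ?_ (mul_nonneg (by linarith) (hu01 a).1)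
      nlinarith [(hu01 a).1, (hu01 a).2]
    calc ∫ a, w a ∂m ≤ ∫ a, (1 - c) * u a ∂m :=
          integral_mono hwint (huint.const_mul _) hptwise
      _ = (1 - c) * A := by rw [integral_const_mul]
  -- Step 2
  rcases eq_or_lt_of_le hA0 with hAz | hApos
  · -- A = 0 : u = 0 a.e.
    have hu0 : u =ᵐ[m] 0 := by
      rw [← integral_eq_zero_iff_of_nonneg (fun a => (hu01 a).1) huint]
      exact hAz.symm
    have hnull : m {a | u a ≠ 0} = 0 := by
      exact ae_iff.mp hu0
    have hgz : ∀ t ∈ Set.Ioc c 1, Ψ (g t) = Ψ 0 := by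
      intro t ht
      have ht0 : 0 < t := lt_of_le_of_lt hc0 ht.1
      have : m {x' | t ≤ u x'} = 0 := by
        refine measure_mono_null ?_ hnull
        intro a ha
        simp only [Set.mem_setOf_eq] at ha ⊢
        intro h0
        rw [h0] at ha
        linarith
      simp [hg, this]
    have heq : ∫ t in c..1, Ψ (g t) = (1 - c) * Ψ 0 := by
      rw [intervalIntegral.integral_of_le hc1,
        setIntegral_congr_fun measurableSet_Ioc hgz]
      simp [Real.volume_Ioc, hc1]
    rw [heq, ← hAz]
  · -- A > 0 : supporting line at A
    obtain ⟨c', hc'0, hsupp⟩ : ∃ c' : ℝ, 0 ≤ c' ∧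
        ∀ s ∈ Set.Icc (0:ℝ) 1, Ψ s ≤ Ψ A + c' * (s - A) := by
      have hAmem : A ∈ Set.Icc (0:ℝ) 1 := ⟨hA0, hA1⟩
      rcases eq_or_lt_of_le hA1 with hA1' | hAlt
      · refine ⟨0, le_refl _, fun s hs => ?_⟩
        have := hmono hs hAmem (hA1' ▸ hs.2)
        linarith
      · set S : Set ℝ := (fun s => (Ψ s - Ψ A) / (s - A)) '' Set.Ioc A 1 with hS
        have hSne : S.Nonempty := ⟨_, ⟨1, ⟨hAlt, le_refl _⟩, rfl⟩⟩
        have hub : ∀ r ∈ Set.Icc (0:ℝ) 1, r < A →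
            ∀ y ∈ S, y ≤ (Ψ A - Ψ r) / (A - r) := by
          rintro r hr hrA y ⟨s, hs, rfl⟩
          exact hconc.slope_anti_adjacent hr ⟨le_trans hA0 hs.1.le, hs.2⟩ hrA hs.1
        have hbdd : BddAbove S := by
          refine ⟨(Ψ A - Ψ 0) / (A - 0), fun y hy => ?_⟩
          exact hub 0 (by norm_num) hApos y hy
        set c' := sSup S with hc'
        have hmem1 : (Ψ 1 - Ψ A) / (1 - A) ∈ S := ⟨1, ⟨hAlt, le_refl _⟩, rfl⟩
        refine ⟨c', ?_, ?_⟩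
        · refine le_trans ?_ (le_csSup hbdd hmem1)
          apply div_nonneg _ (by linarith)
          have := hmono hAmem (by norm_num : (1:ℝ) ∈ Set.Icc (0:ℝ) 1) hA1
          linarith
        · intro s hs
          rcases lt_trichotomy s A with hsA | hsA | hsA
          · have hle : c' ≤ (Ψ A - Ψ s) / (A - s) :=
              csSup_le hSne (hub s hs hsA)
            rw [le_div_iff₀ (by linarith : 0 < A - s)] at hle
            nlinarith
          · subst hsA; simp
          · have hmem : (Ψ s - Ψ A) / (s - A) ∈ S := ⟨s, ⟨hsA, hs.2⟩, rfl⟩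
            have hle : (Ψ s - Ψ A) / (s - A) ≤ c' := le_csSup hbdd hmem
            rw [div_le_iff₀ (by linarith : 0 < s - A)] at hle
            nlinarith
    -- integrate the supporting line
    have hlin : Antitone fun t => Ψ A + c' * (g t - A) := by
      intro t s hts
      have h1 := mul_le_mul_of_nonneg_left (hganti hts) hc'0
      dsimp only
      nlinarith
    have hint1 : IntervalIntegrable (fun t => Ψ (g t)) volume c 1 :=
      hΨganti.intervalIntegrable
    have hint2 : IntervalIntegrable (fun t => Ψ A + c' * (g t - A)) volume c 1 :=
      hlin.intervalIntegrable
    have hmono' : ∫ t in c..1, Ψ (g t) ≤ ∫ t in c..1, (Ψ A + c' * (g t - A)) := by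
      refine intervalIntegral.integral_mono_on hc1 hint1 hint2 fun t _ => ?_
      exact hsupp (g t) (hg01 t)
    have hcalc : ∫ t in c..1, (Ψ A + c' * (g t - A))
        = (1 - c) * (Ψ A - c' * A) + c' * ∫ t in c..1, g t := by
      have hgint : IntervalIntegrable g volume c 1 := hganti.intervalIntegrable
      have : ∀ t, Ψ A + c' * (g t - A) = c' * g t + (Ψ A - c' * A) := by
        intro t; ring
      simp_rw [this]
      rw [intervalIntegral.integral_add (hgint.const_mul c')
          intervalIntegrable_const,
        intervalIntegral.integral_const_mul, intervalIntegral.integral_const]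
      ring_nf
    have hΨA : Ψ A ∈ Set.Icc (0:ℝ) 1 := hrange A ⟨hA0, hA1⟩
    have hgkey : c' * ∫ t in c..1, g t ≤ c' * ((1 - c) * A) :=
      mul_le_mul_of_nonneg_left key hc'0
    calc ∫ t in c..1, Ψ (g t) ≤ (1 - c) * (Ψ A - c' * A) + c' * ∫ t in c..1, g t := by
          rw [← hcalc]; exact hmono'
      _ ≤ (1 - c) * (Ψ A - c' * A) + c' * ((1 - c) * A) := by linarith
      _ = (1 - c) * Ψ A := by ring
end

section
/- Let Ψ:[0,1]→[0,1] be concave and non-decreasing. For any measurable u: X → [0,1], ProbTV_Ψ(u) := ∫_0^1 ProbPer_Ψ({u ≥ t}) dt satisfies ProbTV_Ψ(u) ≤ ProbJ_Ψ(u), where ProbJ_Ψ(u) := ∫_X (1−u(x)) Ψ( ∫ u dm_x ) dρ_0(x) + ∫_X u(x) Ψ( ∫ (1−u) dm_x ) dρ_1(x). -/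
open MeasureTheory Set
open scoped ENNReal

/-- Supporting line at `c` for a monotone concave function on `[0,1]`. -/
lemma aux_support {Ψ : ℝ → ℝ}
    (hconc : ConcaveOn ℝ (Set.Icc (0:ℝ) 1) Ψ)
    (hmono : MonotoneOn Ψ (Set.Icc (0:ℝ) 1))
    {c : ℝ} (hc : c ∈ Set.Icc (0:ℝ) 1) (hc0 : 0 < c) :
    ∃ s : ℝ, 0 ≤ s ∧ ∀ x ∈ Set.Icc (0:ℝ) 1, Ψ x ≤ Ψ c + s * (x - c) := by
  rcases eq_or_lt_of_le hc.2 with h1 | h1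
  · refine ⟨0, le_rfl, fun x hx => ?_⟩
    have := hmono hx hc (h1 ▸ hx.2)
    linarith
  · -- c < 1
    set S : Set ℝ := (fun x => (Ψ x - Ψ c) / (x - c)) '' Set.Ioc c 1 with hS
    have hne : S.Nonempty := ⟨_, ⟨1, ⟨h1, le_rfl⟩, rfl⟩⟩
    have hc2 : c / 2 ∈ Set.Icc (0:ℝ) 1 := ⟨by linarith [hc.1], by linarith [hc.2]⟩
    have hbdd : BddAbove S := by
      refine ⟨(Ψ c - Ψ (c/2)) / (c - c/2), ?_⟩
      rintro r ⟨x, hx, rfl⟩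
      exact hconc.slope_anti_adjacent hc2 ⟨(hc0.trans hx.1).le, hx.2⟩ (by linarith) hx.1
    set s := sSup S with hs
    have hmem1 : (Ψ 1 - Ψ c) / (1 - c) ∈ S := ⟨1, ⟨h1, le_rfl⟩, rfl⟩
    have hs0 : 0 ≤ s := by
      refine le_trans ?_ (le_csSup hbdd hmem1)
      have := hmono hc (⟨zero_le_one, le_rfl⟩ : (1:ℝ) ∈ Set.Icc (0:ℝ) 1) hc.2
      exact div_nonneg (by linarith) (by linarith)
    refine ⟨s, hs0, fun x hx => ?_⟩
    rcases lt_trichotomy x c with hxc | hxc | hxc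
    · -- x < c : s ≤ slope(x,c)
      have hub : (Ψ c - Ψ x) / (c - x) ∈ upperBounds S := by
        rintro r ⟨y, hy, rfl⟩
        exact hconc.slope_anti_adjacent hx ⟨(hc0.trans hy.1).le, hy.2⟩ hxc hy.1
      have hle : s ≤ (Ψ c - Ψ x) / (c - x) := csSup_le hne hub
      have hcx : (0:ℝ) < c - x := by linarith
      rw [le_div_iff₀ hcx] at hle
      linarith
    · simp [hxc]
    · -- c < x : slope(c,x) ≤ s
      have hle : (Ψ x - Ψ c) / (x - c) ≤ s := le_csSup hbdd ⟨x, ⟨hxc, hx.2⟩, rfl⟩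
      have hxc' : (0:ℝ) < x - c := by linarith
      rw [div_le_iff₀ hxc'] at hle
      linarith

lemma aux_jensen {Ψ : ℝ → ℝ}
    (hconc : ConcaveOn ℝ (Set.Icc (0:ℝ) 1) Ψ)
    (hmono : MonotoneOn Ψ (Set.Icc (0:ℝ) 1))
    (hrange : ∀ t ∈ Set.Icc (0:ℝ) 1, Ψ t ∈ Set.Icc (0:ℝ) 1)
    {a b c : ℝ} (hab : a ≤ b) (hc : c ∈ Set.Icc (0:ℝ) 1)
    {F : ℝ → ℝ} (hF : Measurable F) (hF01 : ∀ t, F t ∈ Set.Icc (0:ℝ) 1)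
    (hint : ∫ t in Set.Ioc a b, F t ≤ (b - a) * c) :
    ∫ t in Set.Ioc a b, Ψ (F t) ≤ (b - a) * Ψ c := by
  haveI hfin : IsFiniteMeasure (volume.restrict (Set.Ioc a b)) := by
    constructor
    rw [Measure.restrict_apply_univ, Real.volume_Ioc]
    exact ENNReal.ofReal_lt_top
  have hFint : IntegrableOn F (Set.Ioc a b) := by
    refine ⟨hF.aestronglyMeasurable, HasFiniteIntegral.of_bounded (C := 1) ?_⟩
    refine ae_of_all _ fun t => ?_
    rw [Real.norm_eq_abs, abs_le]
    exact ⟨by linarith [(hF01 t).1], (hF01 t).2⟩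
  have huniv : ((volume.restrict (Set.Ioc a b)) Set.univ).toReal = b - a := by
    rw [Measure.restrict_apply_univ, Real.volume_Ioc, ENNReal.toReal_ofReal (by linarith)]
  rcases eq_or_lt_of_le hc.1 with hc0 | hc0
  · -- c = 0
    have h0 : ∫ t in Set.Ioc a b, F t = 0 := by
      refine le_antisymm (by rw [← hc0] at hint; linarith) ?_
      exact integral_nonneg fun t => (hF01 t).1
    have hae : F =ᵐ[volume.restrict (Set.Ioc a b)] 0 :=
      (integral_eq_zero_iff_of_nonneg_ae (ae_of_all _ fun t => (hF01 t).1) hFint).mp h0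
    have : ∫ t in Set.Ioc a b, Ψ (F t) = ∫ _t in Set.Ioc a b, Ψ 0 := by
      refine integral_congr_ae (hae.mono fun t ht => ?_)
      simp only [Pi.zero_apply] at ht
      show Ψ (F t) = Ψ 0
      rw [ht]
    rw [this, integral_const, measureReal_def, huniv, ← hc0]
    simp [smul_eq_mul]
  · -- 0 < c
    obtain ⟨s, hs0, hsupp⟩ := aux_support hconc hmono hc hc0
    have hle : ∫ t in Set.Ioc a b, Ψ (F t) ≤ ∫ t in Set.Ioc a b, (Ψ c + s * (F t - c)) := by
      refine integral_mono_of_nonneg (ae_of_all _ fun t => (hrange _ (hF01 t)).1) ?_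
        (ae_of_all _ fun t => hsupp _ (hF01 t))
      exact (integrable_const _).add ((hFint.sub (integrable_const _)).const_mul s)
    have hInt2 : Integrable (fun t => s * (F t - c)) (volume.restrict (Set.Ioc a b)) := by
      exact (hFint.sub (integrable_const _)).const_mul s
    have heq : ∫ t in Set.Ioc a b, (Ψ c + s * (F t - c))
        = (b - a) * Ψ c + s * ((∫ t in Set.Ioc a b, F t) - (b - a) * c) := by
      rw [integral_add (integrable_const _) hInt2,
        integral_const, measureReal_def, huniv, integral_const_mul,
        integral_sub hFint (integrable_const _), integral_const, measureReal_def, huniv]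
      simp only [smul_eq_mul]
      try ring
    have : s * ((∫ t in Set.Ioc a b, F t) - (b - a) * c) ≤ 0 :=
      mul_nonpos_of_nonneg_of_nonpos hs0 (by linarith)
    linarith

theorem stmt8 {X : Type*} [MeasurableSpace X]
    (m : X → Measure X) (hm : ∀ x, IsProbabilityMeasure (m x))
    (hmeas : ∀ S : Set X, MeasurableSet S → Measurable fun x => (m x S).toReal)
    (ρ₀ ρ₁ : Measure X) [IsFiniteMeasure ρ₀] [IsFiniteMeasure ρ₁]
    (Ψ : ℝ → ℝ)
    (hconc : ConcaveOn ℝ (Set.Icc (0:ℝ) 1) Ψ)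
    (hmono : MonotoneOn Ψ (Set.Icc (0:ℝ) 1))
    (hrange : ∀ t ∈ Set.Icc (0:ℝ) 1, Ψ t ∈ Set.Icc (0:ℝ) 1)
    (u : X → ℝ) (hu : Measurable u) (hu01 : ∀ x, u x ∈ Set.Icc (0:ℝ) 1) :
    (∫ t in (0:ℝ)..1,
        ((∫ x in {x | t ≤ u x}ᶜ, Ψ ((m x {x' | t ≤ u x'}).toReal) ∂ρ₀)
          + ∫ x in {x | t ≤ u x}, Ψ ((m x {x' | t ≤ u x'}ᶜ).toReal) ∂ρ₁))
    ≤ (∫ x, (1 - u x) * Ψ (∫ x', u x' ∂(m x)) ∂ρ₀)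
      + ∫ x, u x * Ψ (∫ x', (1 - u x') ∂(m x)) ∂ρ₁ := by
  classical
  have hu0 : ∀ x, 0 ≤ u x := fun x => (hu01 x).1
  have hu1 : ∀ x, u x ≤ 1 := fun x => (hu01 x).2
  haveI : ∀ x, IsProbabilityMeasure (m x) := hm
  -- the kernel
  have hmM : Measurable (fun x => m x) := by
    refine Measure.measurable_of_measurable_coe _ fun s hs => ?_
    have h1 : (fun x => m x s) = fun x => ENNReal.ofReal ((m x s).toReal) := by
      funext x; rw [ENNReal.ofReal_toReal (measure_ne_top _ _)]
    rw [h1]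
    exact ENNReal.measurable_ofReal.comp (hmeas s hs)
  set κ : ProbabilityTheory.Kernel X X := ⟨m, hmM⟩ with hκdef
  haveI : ProbabilityTheory.IsMarkovKernel κ := ⟨fun x => hm x⟩
  have hκ : ∀ x, κ x = m x := fun x => rfl
  set κ' : ProbabilityTheory.Kernel (ℝ × X) X :=
    ProbabilityTheory.Kernel.comap κ (Prod.snd : ℝ × X → X) measurable_snd with hκ'def
  haveI : ProbabilityTheory.IsMarkovKernel κ' := by
    rw [hκ'def]; infer_instance
  have hκ' : ∀ p : ℝ × X, κ' p = m p.2 := fun p => by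
    rw [hκ'def, ProbabilityTheory.Kernel.comap_apply, hκ]
  -- section measurability
  have measT : ∀ T : Set (ℝ × X), MeasurableSet T →
      Measurable (fun p : ℝ × X => (m p.2 {y | (p.1, y) ∈ T}).toReal) := by
    intro T hT
    have key : Measurable (fun p : ℝ × X => m p.2 {y | (p.1, y) ∈ T}) := by
      have h2 : (fun p : ℝ × X => m p.2 {y | (p.1, y) ∈ T})
          = fun p : ℝ × X => ∫⁻ y, T.indicator (fun _ => (1:ℝ≥0∞)) (p.1, y)
              ∂(κ' p) := by
        funext p
        rw [hκ' p]
        have hsec : MeasurableSet {y | (p.1, y) ∈ T} := measurable_prodMk_left hT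
        rw [← lintegral_indicator_one hsec]
        congr 1
      rw [h2]
      exact Measurable.lintegral_kernel_prod_right'
        ((measurable_const.indicator hT).comp
          ((measurable_fst.comp measurable_fst).prodMk measurable_snd))
    exact key.ennreal_toReal
  have hT₀ : MeasurableSet {p : ℝ × X | p.1 ≤ u p.2} :=
    measurableSet_le measurable_fst (hu.comp measurable_snd)
  set F₀ : ℝ × X → ℝ := fun p => (m p.2 {y | p.1 ≤ u y}).toReal with hF₀def
  set F₁ : ℝ × X → ℝ := fun p => (m p.2 {y | p.1 ≤ u y}ᶜ).toReal with hF₁def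
  have hF₀m : Measurable F₀ := measT _ hT₀
  have hF₁m : Measurable F₁ := measT _ hT₀.compl
  have hmeas01 : ∀ (x : X) (S : Set X), (m x S).toReal ∈ Set.Icc (0:ℝ) 1 := by
    intro x S
    refine ⟨ENNReal.toReal_nonneg, ?_⟩
    have h : m x S ≤ m x Set.univ := measure_mono (Set.subset_univ S)
    have h2 : m x Set.univ = 1 := measure_univ
    calc (m x S).toReal ≤ (m x Set.univ).toReal :=
          ENNReal.toReal_mono (by rw [h2]; exact ENNReal.one_ne_top) h
      _ = 1 := by rw [h2]; rfl
  -- the clamped version of Ψ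
  set Φ : ℝ → ℝ := fun r => Ψ (max 0 (min r 1)) with hΦdef
  have hclamp : ∀ r : ℝ, max 0 (min r 1) ∈ Set.Icc (0:ℝ) 1 :=
    fun r => ⟨le_max_left _ _, max_le zero_le_one (min_le_right _ _)⟩
  have hΦmono : Monotone Φ := fun r r' hrr' =>
    hmono (hclamp r) (hclamp r') (max_le_max le_rfl (min_le_min hrr' le_rfl))
  have hΦmeas : Measurable Φ := hΦmono.measurable
  have hΦeq : ∀ r ∈ Set.Icc (0:ℝ) 1, Φ r = Ψ r := by
    intro r hr
    show Ψ (max 0 (min r 1)) = Ψ r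
    rw [min_eq_left hr.2, max_eq_right hr.1]
  have hΦrange : ∀ r, Φ r ∈ Set.Icc (0:ℝ) 1 := fun r => hrange _ (hclamp r)
  -- the measures
  set μt : Measure ℝ := volume.restrict (Set.Ioc (0:ℝ) 1) with hμt
  haveI : IsFiniteMeasure μt := by
    constructor
    rw [hμt, Measure.restrict_apply_univ, Real.volume_Ioc]
    exact ENNReal.ofReal_lt_top
  -- the H functions
  set H₀ : ℝ × X → ℝ :=
    fun p => Set.indicator {q : ℝ × X | q.1 ≤ u q.2}ᶜ (fun q => Φ (F₀ q)) p with hH₀def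
  set H₁ : ℝ × X → ℝ :=
    fun p => Set.indicator {q : ℝ × X | q.1 ≤ u q.2} (fun q => Φ (F₁ q)) p with hH₁def
  have hH₀m : Measurable H₀ := (hΦmeas.comp hF₀m).indicator hT₀.compl
  have hH₁m : Measurable H₁ := (hΦmeas.comp hF₁m).indicator hT₀
  have hH₀b : ∀ p, H₀ p ∈ Set.Icc (0:ℝ) 1 := by
    intro p
    show Set.indicator _ _ p ∈ _
    by_cases hp : p ∈ {q : ℝ × X | q.1 ≤ u q.2}ᶜ
    · rw [Set.indicator_of_mem hp]; exact hΦrange _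
    · rw [Set.indicator_of_notMem hp]; exact ⟨le_rfl, zero_le_one⟩
  have hH₁b : ∀ p, H₁ p ∈ Set.Icc (0:ℝ) 1 := by
    intro p
    show Set.indicator _ _ p ∈ _
    by_cases hp : p ∈ {q : ℝ × X | q.1 ≤ u q.2}
    · rw [Set.indicator_of_mem hp]; exact hΦrange _
    · rw [Set.indicator_of_notMem hp]; exact ⟨le_rfl, zero_le_one⟩
  have hH₀int : Integrable H₀ (μt.prod ρ₀) := by
    refine ⟨hH₀m.aestronglyMeasurable,
      HasFiniteIntegral.of_bounded (C := 1) (ae_of_all _ fun p => ?_)⟩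
    rw [Real.norm_eq_abs, abs_le]
    exact ⟨by linarith [(hH₀b p).1], (hH₀b p).2⟩
  have hH₁int : Integrable H₁ (μt.prod ρ₁) := by
    refine ⟨hH₁m.aestronglyMeasurable,
      HasFiniteIntegral.of_bounded (C := 1) (ae_of_all _ fun p => ?_)⟩
    rw [Real.norm_eq_abs, abs_le]
    exact ⟨by linarith [(hH₁b p).1], (hH₁b p).2⟩
  -- the conditional expectations
  have hcu : ∀ x, ∫ y, u y ∂(m x) = (∫⁻ y, ENNReal.ofReal (u y) ∂(m x)).toReal := fun x =>
    integral_eq_lintegral_of_nonneg_ae (ae_of_all _ hu0) hu.aestronglyMeasurable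
  have hcu_m : Measurable fun x => ∫ y, u y ∂(m x) := by
    simp_rw [hcu]
    exact (Measurable.lintegral_kernel (κ := κ)
      (ENNReal.measurable_ofReal.comp hu)).ennreal_toReal
  have hcv : ∀ x, ∫ y, (1 - u y) ∂(m x)
      = (∫⁻ y, ENNReal.ofReal (1 - u y) ∂(m x)).toReal := fun x =>
    integral_eq_lintegral_of_nonneg_ae
      (ae_of_all _ fun y => by show (0:ℝ) ≤ 1 - u y; linarith [hu1 y])
      (measurable_const.sub hu).aestronglyMeasurable
  have hcv_m : Measurable fun x => ∫ y, (1 - u y) ∂(m x) := by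
    simp_rw [hcv]
    exact (Measurable.lintegral_kernel (κ := κ)
      (ENNReal.measurable_ofReal.comp (measurable_const.sub hu))).ennreal_toReal
  have hui : ∀ x, Integrable u (m x) := fun x =>
    ⟨hu.aestronglyMeasurable, HasFiniteIntegral.of_bounded (C := 1) (ae_of_all _ fun y => by
      rw [Real.norm_eq_abs, abs_le]; exact ⟨by linarith [hu0 y], hu1 y⟩)⟩
  have hvi : ∀ x, Integrable (fun y => 1 - u y) (m x) := fun x =>
    (integrable_const 1).sub (hui x)
  have hcu01 : ∀ x, (∫ y, u y ∂(m x)) ∈ Set.Icc (0:ℝ) 1 := by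
    intro x
    refine ⟨integral_nonneg hu0, ?_⟩
    calc ∫ y, u y ∂(m x) ≤ ∫ _y, (1:ℝ) ∂(m x) :=
          integral_mono (hui x) (integrable_const _) hu1
      _ = 1 := by simp
  have hcv01 : ∀ x, (∫ y, (1 - u y) ∂(m x)) ∈ Set.Icc (0:ℝ) 1 := by
    intro x
    refine ⟨integral_nonneg fun y => by show (0:ℝ) ≤ 1 - u y; linarith [hu1 y], ?_⟩
    calc ∫ y, (1 - u y) ∂(m x) ≤ ∫ _y, (1:ℝ) ∂(m x) :=
          integral_mono (hvi x) (integrable_const _) (fun y => by linarith [hu0 y])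
      _ = 1 := by simp
  -- rewriting the inner set integrals as full integrals of H₀, H₁
  have hg₀ : ∀ t : ℝ, (∫ x in {x | t ≤ u x}ᶜ, Ψ ((m x {x' | t ≤ u x'}).toReal) ∂ρ₀)
      = ∫ x, H₀ (t, x) ∂ρ₀ := by
    intro t
    have hsm : MeasurableSet ({x : X | t ≤ u x}ᶜ) :=
      (measurableSet_le measurable_const hu).compl
    rw [← integral_indicator hsm]
    refine integral_congr_ae (ae_of_all _ fun x => ?_)
    show Set.indicator _ _ x = Set.indicator _ _ (t, x)
    simp only [Set.indicator_apply, Set.mem_compl_iff, Set.mem_setOf_eq]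
    by_cases hx : t ≤ u x
    · simp only [hx, not_true_eq_false, if_false]
    · simp only [hx, not_false_eq_true, if_true]
      exact (hΦeq _ (hmeas01 x _)).symm
  have hg₁ : ∀ t : ℝ, (∫ x in {x | t ≤ u x}, Ψ ((m x {x' | t ≤ u x'}ᶜ).toReal) ∂ρ₁)
      = ∫ x, H₁ (t, x) ∂ρ₁ := by
    intro t
    have hsm : MeasurableSet {x : X | t ≤ u x} :=
      measurableSet_le measurable_const hu
    rw [← integral_indicator hsm]
    refine integral_congr_ae (ae_of_all _ fun x => ?_)
    show Set.indicator _ _ x = Set.indicator _ _ (t, x)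
    simp only [Set.indicator_apply, Set.mem_setOf_eq]
    by_cases hx : t ≤ u x
    · simp only [hx, if_true]
      exact (hΦeq _ (hmeas01 x _)).symm
    · simp only [hx, if_false]
  -- pointwise-in-x bound for term 0
  have hint₀ : ∀ x, (∫ t in Set.Ioc (u x) 1, F₀ (t, x)) ≤ (1 - u x) * ∫ y, u y ∂(m x) := by
    intro x
    set ν : Measure ℝ := volume.restrict (Set.Ioc (u x) 1) with hν
    haveI : IsFiniteMeasure ν := by
      constructor
      rw [hν, Measure.restrict_apply_univ, Real.volume_Ioc]
      exact ENNReal.ofReal_lt_top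
    set G : ℝ × X → ℝ :=
      fun q => Set.indicator {q : ℝ × X | q.1 ≤ u q.2} (fun _ => (1:ℝ)) q with hGdef
    have hGm : Measurable G := measurable_const.indicator hT₀
    have hGb : ∀ q, G q ∈ Set.Icc (0:ℝ) 1 := by
      intro q
      show Set.indicator _ _ q ∈ _
      by_cases hq : q ∈ {q : ℝ × X | q.1 ≤ u q.2}
      · rw [Set.indicator_of_mem hq]; exact ⟨zero_le_one, le_rfl⟩
      · rw [Set.indicator_of_notMem hq]; exact ⟨le_rfl, zero_le_one⟩
    have hGint : Integrable G (ν.prod (m x)) := by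
      refine ⟨hGm.aestronglyMeasurable,
        HasFiniteIntegral.of_bounded (C := 1) (ae_of_all _ fun q => ?_)⟩
      rw [Real.norm_eq_abs, abs_le]
      exact ⟨by linarith [(hGb q).1], (hGb q).2⟩
    have e1 : ∀ t, F₀ (t, x) = ∫ y, G (t, y) ∂(m x) := by
      intro t
      have heq : ∀ y, G (t, y)
          = Set.indicator {y : X | t ≤ u y} (fun _ => (1:ℝ)) y := fun y => rfl
      rw [integral_congr_ae (ae_of_all _ heq),
        integral_indicator_const (1:ℝ) (measurableSet_le measurable_const hu)]
      show (m x {y | t ≤ u y}).toReal = _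
      rw [smul_eq_mul, mul_one, measureReal_def]
    have e2 : ∫ t, (∫ y, G (t, y) ∂(m x)) ∂ν = ∫ y, (∫ t, G (t, y) ∂ν) ∂(m x) :=
      integral_integral_swap (by exact hGint)
    have e3 : ∀ y, (∫ t, G (t, y) ∂ν) = max (u y - u x) 0 := by
      intro y
      have heq : ∀ t, G (t, y)
          = Set.indicator (Set.Iic (u y)) (fun _ => (1:ℝ)) t := fun t => rfl
      rw [integral_congr_ae (ae_of_all _ heq),
        integral_indicator_const (1:ℝ) measurableSet_Iic, hν, measureReal_def,
        Measure.restrict_apply measurableSet_Iic]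
      have hset : Set.Iic (u y) ∩ Set.Ioc (u x) 1 = Set.Ioc (u x) (u y) := by
        ext t
        simp only [Set.mem_inter_iff, Set.mem_Iic, Set.mem_Ioc]
        constructor
        · rintro ⟨h1, h2, h3⟩; exact ⟨h2, h1⟩
        · rintro ⟨h1, h2⟩; exact ⟨h2, h1, h2.trans (hu1 y)⟩
      rw [hset, Real.volume_Ioc, smul_eq_mul, mul_one, ENNReal.toReal_ofReal']
    calc (∫ t in Set.Ioc (u x) 1, F₀ (t, x))
        = ∫ t, (∫ y, G (t, y) ∂(m x)) ∂ν := integral_congr_ae (ae_of_all _ fun t => e1 t)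
      _ = ∫ y, (∫ t, G (t, y) ∂ν) ∂(m x) := e2
      _ = ∫ y, max (u y - u x) 0 ∂(m x) := integral_congr_ae (ae_of_all _ fun y => e3 y)
      _ ≤ ∫ y, (1 - u x) * u y ∂(m x) := by
          refine integral_mono ?_ ((hui x).const_mul _) fun y => ?_
          · refine ⟨((hu.sub measurable_const).max measurable_const).aestronglyMeasurable,
              HasFiniteIntegral.of_bounded (C := 1) (ae_of_all _ fun y => ?_)⟩
            rw [Real.norm_eq_abs, abs_le]
            constructor
            · linarith [le_max_right (u y - u x) 0]
            · exact max_le (by linarith [hu1 y, hu0 x]) zero_le_one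
          · refine max_le ?_ (mul_nonneg (by linarith [hu1 x]) (hu0 y))
            nlinarith [mul_nonneg (hu0 x) (sub_nonneg.mpr (hu1 y))]
      _ = (1 - u x) * ∫ y, u y ∂(m x) := integral_const_mul _ _
  have hbound₀ : ∀ x, (∫ t, H₀ (t, x) ∂μt) ≤ (1 - u x) * Ψ (∫ y, u y ∂(m x)) := by
    intro x
    have e1 : (fun t => H₀ (t, x)) = Set.indicator (Set.Ioi (u x)) (fun t => Φ (F₀ (t, x))) := by
      funext t
      show Set.indicator _ _ (t, x) = _
      simp only [Set.indicator_apply, Set.mem_compl_iff, Set.mem_setOf_eq, Set.mem_Ioi]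
      by_cases h : t ≤ u x
      · simp [h, not_lt.mpr h]
      · simp [h, not_le.mp h]
    rw [show (∫ t, H₀ (t, x) ∂μt) = ∫ t, Set.indicator (Set.Ioi (u x))
        (fun t => Φ (F₀ (t, x))) t ∂μt from by rw [← e1], hμt,
      integral_indicator measurableSet_Ioi,
      Measure.restrict_restrict measurableSet_Ioi]
    have e2 : Set.Ioi (u x) ∩ Set.Ioc (0:ℝ) 1 = Set.Ioc (u x) 1 := by
      ext t
      simp only [Set.mem_inter_iff, Set.mem_Ioi, Set.mem_Ioc]
      constructor
      · rintro ⟨h1, h2, h3⟩; exact ⟨h1, h3⟩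
      · rintro ⟨h1, h2⟩; exact ⟨h1, lt_of_le_of_lt (hu0 x) h1, h2⟩
    rw [e2]
    have e3 : ∫ t in Set.Ioc (u x) 1, Φ (F₀ (t, x)) = ∫ t in Set.Ioc (u x) 1, Ψ (F₀ (t, x)) :=
      integral_congr_ae (ae_of_all _ fun t => hΦeq _ (hmeas01 _ _))
    rw [e3]
    exact aux_jensen hconc hmono hrange (hu1 x) (hcu01 x)
      (hF₀m.comp (measurable_id.prodMk measurable_const))
      (fun t => hmeas01 _ _) (hint₀ x)
  -- pointwise-in-x bound for term 1
  have hint₁ : ∀ x, (∫ t in Set.Ioc (0:ℝ) (u x), F₁ (t, x))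
      ≤ (u x - 0) * ∫ y, (1 - u y) ∂(m x) := by
    intro x
    set ν : Measure ℝ := volume.restrict (Set.Ioc (0:ℝ) (u x)) with hν
    haveI : IsFiniteMeasure ν := by
      constructor
      rw [hν, Measure.restrict_apply_univ, Real.volume_Ioc]
      exact ENNReal.ofReal_lt_top
    set G : ℝ × X → ℝ :=
      fun q => Set.indicator ({q : ℝ × X | q.1 ≤ u q.2}ᶜ) (fun _ => (1:ℝ)) q with hGdef
    have hGm : Measurable G := measurable_const.indicator hT₀.compl
    have hGb : ∀ q, G q ∈ Set.Icc (0:ℝ) 1 := by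
      intro q
      show Set.indicator _ _ q ∈ _
      by_cases hq : q ∈ {q : ℝ × X | q.1 ≤ u q.2}ᶜ
      · rw [Set.indicator_of_mem hq]; exact ⟨zero_le_one, le_rfl⟩
      · rw [Set.indicator_of_notMem hq]; exact ⟨le_rfl, zero_le_one⟩
    have hGint : Integrable G (ν.prod (m x)) := by
      refine ⟨hGm.aestronglyMeasurable,
        HasFiniteIntegral.of_bounded (C := 1) (ae_of_all _ fun q => ?_)⟩
      rw [Real.norm_eq_abs, abs_le]
      exact ⟨by linarith [(hGb q).1], (hGb q).2⟩
    have e1 : ∀ t, F₁ (t, x) = ∫ y, G (t, y) ∂(m x) := by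
      intro t
      have heq : ∀ y, G (t, y)
          = Set.indicator ({y : X | t ≤ u y}ᶜ) (fun _ => (1:ℝ)) y := fun y => rfl
      rw [integral_congr_ae (ae_of_all _ heq),
        integral_indicator_const (1:ℝ) (measurableSet_le measurable_const hu).compl]
      show (m x ({y | t ≤ u y}ᶜ)).toReal = _
      rw [smul_eq_mul, mul_one, measureReal_def]
    have e2 : ∫ t, (∫ y, G (t, y) ∂(m x)) ∂ν = ∫ y, (∫ t, G (t, y) ∂ν) ∂(m x) :=
      integral_integral_swap (by exact hGint)
    have e3 : ∀ y, (∫ t, G (t, y) ∂ν) = max (u x - u y) 0 := by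
      intro y
      have heq : ∀ t, G (t, y)
          = Set.indicator ((Set.Iic (u y))ᶜ) (fun _ => (1:ℝ)) t := fun t => rfl
      rw [integral_congr_ae (ae_of_all _ heq),
        integral_indicator_const (1:ℝ) measurableSet_Iic.compl, hν, measureReal_def,
        Measure.restrict_apply measurableSet_Iic.compl]
      have hset : (Set.Iic (u y))ᶜ ∩ Set.Ioc (0:ℝ) (u x) = Set.Ioc (u y) (u x) := by
        ext t
        simp only [Set.mem_inter_iff, Set.mem_compl_iff, Set.mem_Iic, Set.mem_Ioc, not_le]
        constructor
        · rintro ⟨h1, h2, h3⟩; exact ⟨h1, h3⟩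
        · rintro ⟨h1, h2⟩; exact ⟨h1, lt_of_le_of_lt (hu0 y) h1, h2⟩
      rw [hset, Real.volume_Ioc, smul_eq_mul, mul_one, ENNReal.toReal_ofReal']
    calc (∫ t in Set.Ioc (0:ℝ) (u x), F₁ (t, x))
        = ∫ t, (∫ y, G (t, y) ∂(m x)) ∂ν := integral_congr_ae (ae_of_all _ fun t => e1 t)
      _ = ∫ y, (∫ t, G (t, y) ∂ν) ∂(m x) := e2
      _ = ∫ y, max (u x - u y) 0 ∂(m x) := integral_congr_ae (ae_of_all _ fun y => e3 y)
      _ ≤ ∫ y, u x * (1 - u y) ∂(m x) := by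
          refine integral_mono ?_ ((hvi x).const_mul _) fun y => ?_
          · refine ⟨((measurable_const.sub hu).max measurable_const).aestronglyMeasurable,
              HasFiniteIntegral.of_bounded (C := 1) (ae_of_all _ fun y => ?_)⟩
            rw [Real.norm_eq_abs, abs_le]
            constructor
            · linarith [le_max_right (u x - u y) 0]
            · exact max_le (by linarith [hu1 x, hu0 y]) zero_le_one
          · refine max_le ?_ (mul_nonneg (hu0 x) (by linarith [hu1 y]))
            nlinarith [mul_nonneg (hu0 y) (sub_nonneg.mpr (hu1 x))]
      _ = u x * ∫ y, (1 - u y) ∂(m x) := integral_const_mul _ _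
      _ = (u x - 0) * ∫ y, (1 - u y) ∂(m x) := by ring
  have hbound₁ : ∀ x, (∫ t, H₁ (t, x) ∂μt) ≤ u x * Ψ (∫ y, (1 - u y) ∂(m x)) := by
    intro x
    have e1 : (fun t => H₁ (t, x)) = Set.indicator (Set.Iic (u x)) (fun t => Φ (F₁ (t, x))) := by
      funext t
      show Set.indicator _ _ (t, x) = _
      simp only [Set.indicator_apply, Set.mem_setOf_eq, Set.mem_Iic]
    rw [show (∫ t, H₁ (t, x) ∂μt) = ∫ t, Set.indicator (Set.Iic (u x))
        (fun t => Φ (F₁ (t, x))) t ∂μt from by rw [← e1], hμt,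
      integral_indicator measurableSet_Iic,
      Measure.restrict_restrict measurableSet_Iic]
    have e2 : Set.Iic (u x) ∩ Set.Ioc (0:ℝ) 1 = Set.Ioc (0:ℝ) (u x) := by
      ext t
      simp only [Set.mem_inter_iff, Set.mem_Iic, Set.mem_Ioc]
      constructor
      · rintro ⟨h1, h2, h3⟩; exact ⟨h2, h1⟩
      · rintro ⟨h1, h2⟩; exact ⟨h2, h1, h2.trans (hu1 x)⟩
    rw [e2]
    have e3 : ∫ t in Set.Ioc (0:ℝ) (u x), Φ (F₁ (t, x))
        = ∫ t in Set.Ioc (0:ℝ) (u x), Ψ (F₁ (t, x)) :=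
      integral_congr_ae (ae_of_all _ fun t => hΦeq _ (hmeas01 _ _))
    rw [e3]
    have := aux_jensen hconc hmono hrange (hu0 x) (hcv01 x)
      (hF₁m.comp (measurable_id.prodMk measurable_const))
      (fun t => hmeas01 _ _) (hint₁ x)
    calc ∫ t in Set.Ioc (0:ℝ) (u x), Ψ (F₁ (t, x))
        ≤ (u x - 0) * Ψ (∫ y, (1 - u y) ∂(m x)) := this
      _ = u x * Ψ (∫ y, (1 - u y) ∂(m x)) := by ring
  -- integrability of the right-hand sides
  have hR₀ : Integrable (fun x => (1 - u x) * Ψ (∫ y, u y ∂(m x))) ρ₀ := by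
    have heqf : (fun x => (1 - u x) * Ψ (∫ y, u y ∂(m x)))
        = fun x => (1 - u x) * Φ (∫ y, u y ∂(m x)) := by
      funext x; rw [hΦeq _ (hcu01 x)]
    rw [heqf]
    refine ⟨((measurable_const.sub hu).mul (hΦmeas.comp hcu_m)).aestronglyMeasurable,
      HasFiniteIntegral.of_bounded (C := 1) (ae_of_all _ fun x => ?_)⟩
    rw [Real.norm_eq_abs, abs_mul]
    have h1 : |1 - u x| ≤ 1 := abs_le.mpr ⟨by linarith [hu1 x], by linarith [hu0 x]⟩
    have h2 : |Φ (∫ y, u y ∂(m x))| ≤ 1 :=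
      abs_le.mpr ⟨by linarith [(hΦrange (∫ y, u y ∂(m x))).1],
        (hΦrange (∫ y, u y ∂(m x))).2⟩
    calc |1 - u x| * |Φ (∫ y, u y ∂(m x))| ≤ 1 * 1 :=
          mul_le_mul h1 h2 (abs_nonneg _) zero_le_one
      _ = 1 := one_mul 1
  have hR₁ : Integrable (fun x => u x * Ψ (∫ y, (1 - u y) ∂(m x))) ρ₁ := by
    have heqf : (fun x => u x * Ψ (∫ y, (1 - u y) ∂(m x)))
        = fun x => u x * Φ (∫ y, (1 - u y) ∂(m x)) := by
      funext x; rw [hΦeq _ (hcv01 x)]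
    rw [heqf]
    refine ⟨(hu.mul (hΦmeas.comp hcv_m)).aestronglyMeasurable,
      HasFiniteIntegral.of_bounded (C := 1) (ae_of_all _ fun x => ?_)⟩
    rw [Real.norm_eq_abs, abs_mul]
    have h1 : |u x| ≤ 1 := abs_le.mpr ⟨by linarith [hu0 x], hu1 x⟩
    have h2 : |Φ (∫ y, (1 - u y) ∂(m x))| ≤ 1 :=
      abs_le.mpr ⟨by linarith [(hΦrange (∫ y, (1 - u y) ∂(m x))).1],
        (hΦrange (∫ y, (1 - u y) ∂(m x))).2⟩
    calc |u x| * |Φ (∫ y, (1 - u y) ∂(m x))| ≤ 1 * 1 :=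
          mul_le_mul h1 h2 (abs_nonneg _) zero_le_one
      _ = 1 := one_mul 1
  -- final assembly
  rw [intervalIntegral.integral_of_le zero_le_one]
  have hsplit : ∫ t in Set.Ioc (0:ℝ) 1,
      ((∫ x in {x | t ≤ u x}ᶜ, Ψ ((m x {x' | t ≤ u x'}).toReal) ∂ρ₀)
        + ∫ x in {x | t ≤ u x}, Ψ ((m x {x' | t ≤ u x'}ᶜ).toReal) ∂ρ₁)
      = (∫ t, (∫ x, H₀ (t, x) ∂ρ₀) ∂μt) + ∫ t, (∫ x, H₁ (t, x) ∂ρ₁) ∂μt := by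
    rw [← integral_add hH₀int.integral_prod_left hH₁int.integral_prod_left]
    refine integral_congr_ae (ae_of_all _ fun t => ?_)
    show (∫ x in {x | t ≤ u x}ᶜ, Ψ ((m x {x' | t ≤ u x'}).toReal) ∂ρ₀)
        + (∫ x in {x | t ≤ u x}, Ψ ((m x {x' | t ≤ u x'}ᶜ).toReal) ∂ρ₁)
      = (∫ y, H₀ (t, y) ∂ρ₀) + ∫ y, H₁ (t, y) ∂ρ₁
    rw [hg₀ t, hg₁ t]
  rw [hsplit]
  have hswap₀ : ∫ t, (∫ x, H₀ (t, x) ∂ρ₀) ∂μt = ∫ x, (∫ t, H₀ (t, x) ∂μt) ∂ρ₀ :=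
    integral_integral_swap (by exact hH₀int)
  have hswap₁ : ∫ t, (∫ x, H₁ (t, x) ∂ρ₁) ∂μt = ∫ x, (∫ t, H₁ (t, x) ∂μt) ∂ρ₁ :=
    integral_integral_swap (by exact hH₁int)
  rw [hswap₀, hswap₁]
  refine add_le_add ?_ ?_
  · exact integral_mono_of_nonneg
      (ae_of_all _ fun x => integral_nonneg fun t => (hH₀b (t, x)).1) hR₀
      (ae_of_all _ hbound₀)
  · exact integral_mono_of_nonneg
      (ae_of_all _ fun x => integral_nonneg fun t => (hH₁b (t, x)).1) hR₁
      (ae_of_all _ hbound₁)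
end

section
/- Let f: X → ℝ be bounded measurable and m a probability measure on X. Then the value at risk p-esssup_{x'∼m} f(x') := inf{ t ∈ ℝ : m({f > t}) ≤ p } is at most CVaR_p(f; m) := inf_{α∈ℝ} ( α + E_{x'∼m}[(f(x')−α)_+]/p ), for any p ∈ (0,1). -/
/-!
For every `α`, Markov's inequality applied to `(f - α)₊` with threshold `E / p`, where
`E = ∫ (f - α)₊ dm`, gives `m {f > α + E / p} ≤ p`; so `α + E / p` is an admissible `t` in the
infimum defining the value at risk. That infimum is over a set bounded below by `-C`, since
`m {f > t} = 1 > p` for `t < -C`.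
-/

open MeasureTheory

namespace MeasureTheory

variable {X : Type*} [MeasurableSpace X] {μ : Measure X}

theorem measureReal_integral_div_lt_le [IsFiniteMeasure μ] {g : X → ℝ} (hg : 0 ≤ᵐ[μ] g)
    (hgi : Integrable g μ) {p : ℝ} (hp : 0 < p) :
    μ.real {x | (∫ x, g x ∂μ) / p < g x} ≤ p := by
  rcases (integral_nonneg_of_ae hg).eq_or_lt with hzero | hpos
  · have hae : g =ᵐ[μ] 0 := (integral_eq_zero_iff_of_nonneg_ae hg hgi).mp hzero.symm
    have hnull : μ {x | (∫ x, g x ∂μ) / p < g x} = 0 := by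
      refine measure_mono_null (fun x hx => ?_) (ae_iff.mp hae)
      simp only [← hzero, zero_div, Set.mem_ofPred_eq] at hx ⊢
      exact hx.ne'
    simp [measureReal_def, hnull, hp.le]
  · set c := (∫ x, g x ∂μ) / p
    have hc : 0 < c := div_pos hpos hp
    have hmarkov : c * μ.real {x | c ≤ g x} ≤ c * p := by
      calc c * μ.real {x | c ≤ g x} ≤ ∫ x, g x ∂μ := mul_meas_ge_le_integral_of_nonneg hg hgi c
        _ = c * p := (div_mul_cancel₀ _ hp.ne').symm
    calc μ.real {x | c < g x} ≤ μ.real {x | c ≤ g x} :=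
          measureReal_mono fun x (hx : c < g x) => hx.le
      _ ≤ p := le_of_mul_le_mul_left hmarkov hc

theorem bddBelow_setOf_measureReal_lt_le [IsProbabilityMeasure μ] {f : X → ℝ} {c p : ℝ}
    (hc : ∀ x, c ≤ f x) (hp : p < 1) : BddBelow {t : ℝ | μ.real {x | t < f x} ≤ p} := by
  refine ⟨c, fun t ht => ?_⟩
  by_contra! htc
  have huniv : {x | t < f x} = Set.univ := Set.eq_univ_of_forall fun x => htc.trans_le (hc x)
  rw [Set.mem_ofPred_eq, huniv, probReal_univ] at ht
  linarith

end MeasureTheory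

theorem stmt13 {X : Type*} [MeasurableSpace X]
    (m : Measure X) [IsProbabilityMeasure m]
    (f : X → ℝ) (hf : Measurable f) (C : ℝ) (hbd : ∀ x, |f x| ≤ C)
    (p : ℝ) (hp0 : 0 < p) (hp1 : p < 1) :
    sInf {t : ℝ | (m {x | t < f x}).toReal ≤ p}
      ≤ ⨅ α : ℝ, α + (∫ x, max (f x - α) 0 ∂m) / p := by
  have hfi : Integrable f m :=
    .of_bound hf.aestronglyMeasurable C (.of_forall fun x => (Real.norm_eq_abs _).trans_le (hbd x))
  have hbdd : BddBelow {t : ℝ | m.real {x | t < f x} ≤ p} :=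
    bddBelow_setOf_measureReal_lt_le (fun x => (abs_le.mp (hbd x)).1) hp1
  refine le_ciInf fun α => csInf_le hbdd ?_
  set E := ∫ x, max (f x - α) 0 ∂m
  have hmarkov : m.real {x | E / p < max (f x - α) 0} ≤ p :=
    measureReal_integral_div_lt_le (.of_forall fun x => le_max_right _ _)
      (hfi.sub (integrable_const α)).pos_part hp0
  refine le_trans (measureReal_mono fun x (hx : α + E / p < f x) => ?_) hmarkov
  show E / p < max (f x - α) 0
  exact lt_max_of_lt_left (by linarith)
end

section
/- Let (X,𝒜) be a measurable space with probability measures {m_x}, finite measures ρ_0, ρ_1, and suppose for every x, m_x(X \ B_ε(x)) = 0, where B_ε(x) is the open ε-ball in a metric on X. Then for every measurable set A: Risk_{Ψ_0}(A) ≤ ProbRisk_{Ψ_0}(A) ≤ Risk_adv(A), where Ψ_0(t) = 1_{t>0}, Risk_{Ψ_0}(A) = ∫ 1_{m_x(A)>0} dρ_0 + ∫ 1_{m_x(Aᶜ)>0} dρ_1, ProbRisk_{Ψ_0}(A) = ∫ max{1_A(x), 1_{m_x(A)>0}} dρ_0 + ∫ max{1_{Aᶜ}(x), 1_{m_x(Aᶜ)>0}}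 dρ_1, and Risk_adv(A) = ∫ sup_{x'∈B_ε(x)} 1_A(x') dρ_0 + ∫ sup_{x'∈B_ε(x)} 1_{Aᶜ}(x') dρ_1. -/
open MeasureTheory

lemma aux_ind_le_one {X : Type*} (A : Set X) (x : X) :
    A.indicator (fun _ => (1:ℝ)) x ≤ 1 := by
  by_cases h : x ∈ A <;> simp [Set.indicator, h]

lemma aux_ind_nonneg {X : Type*} (A : Set X) (x : X) :
    0 ≤ A.indicator (fun _ => (1:ℝ)) x := by
  by_cases h : x ∈ A <;> simp [Set.indicator, h]

lemma aux_sup_eq {X : Type*} [MetricSpace X] (ε : ℝ) (hε : 0 < ε) (A : Set X) (x : X) :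
    (⨆ x' ∈ Metric.ball x ε, A.indicator (fun _ => (1:ℝ)) x')
      = (⋃ a ∈ A, Metric.ball a ε).indicator (fun _ => (1:ℝ)) x := by
  by_cases hx : x ∈ ⋃ a ∈ A, Metric.ball a ε
  · rw [Set.indicator_of_mem hx]
    obtain ⟨a, ha, hxa⟩ := Set.mem_iUnion₂.mp hx
    refine le_antisymm ?_ ?_
    · exact Real.iSup_le (fun x' => Real.iSup_le (fun _ => aux_ind_le_one A x') zero_le_one)
        zero_le_one
    · have bdd : BddAbove (Set.range fun x' =>
          ⨆ _ : x' ∈ Metric.ball x ε, A.indicator (fun _ => (1:ℝ)) x') := by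
        refine ⟨1, ?_⟩
        rintro _ ⟨x', rfl⟩
        exact Real.iSup_le (fun _ => aux_ind_le_one A x') zero_le_one
      have hax : a ∈ Metric.ball x ε := by
        rw [Metric.mem_ball, dist_comm]; exact hxa
      calc (1:ℝ) = A.indicator (fun _ => (1:ℝ)) a := by simp [Set.indicator_of_mem ha]
        _ = ⨆ _ : a ∈ Metric.ball x ε, A.indicator (fun _ => (1:ℝ)) a := (ciSup_pos (f := fun _ => A.indicator (fun _ => (1:ℝ)) a) hax).symm
        _ ≤ _ := le_ciSup bdd a
  · rw [Set.indicator_of_notMem hx]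
    refine le_antisymm ?_ ?_
    · refine Real.iSup_le (fun x' => Real.iSup_le (fun hx' => ?_) le_rfl) le_rfl
      have : x' ∉ A := by
        intro hA'
        exact hx (Set.mem_iUnion₂.mpr ⟨x', hA', by rw [Metric.mem_ball, dist_comm]; exact hx'⟩)
      simp [Set.indicator_of_notMem this]
    · exact Real.iSup_nonneg (fun x' => Real.iSup_nonneg (fun _ => aux_ind_nonneg A x'))

lemma aux_part1 {X : Type*} [MeasurableSpace X] (ρ : Measure X) [IsFiniteMeasure ρ]
    (A : Set X) (hA : MeasurableSet A) (S : Set X) :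
    ∫ x, S.indicator (fun _ => (1:ℝ)) x ∂ρ
      ≤ ∫ x, max (A.indicator (fun _ => (1:ℝ)) x) (S.indicator (fun _ => (1:ℝ)) x) ∂ρ := by
  by_cases hi : Integrable (S.indicator fun _ => (1:ℝ)) ρ
  · have hiA : Integrable (A.indicator fun _ => (1:ℝ)) ρ :=
      (integrable_const (1:ℝ)).indicator hA
    have : Integrable (fun x => max (A.indicator (fun _ => (1:ℝ)) x) (S.indicator (fun _ => (1:ℝ)) x)) ρ := hiA.sup hi
    exact integral_mono hi this (fun x => le_max_right _ _)
  · rw [integral_undef hi]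
    exact integral_nonneg (fun x => le_max_of_le_left (aux_ind_nonneg A x))

lemma aux_part2 {X : Type*} [MetricSpace X] [MeasurableSpace X] [BorelSpace X]
    (ρ : Measure X) [IsFiniteMeasure ρ] (ε : ℝ) (hε : 0 < ε)
    (A : Set X) (S : Set X) (hS : ∀ x, x ∈ S → (A ∩ Metric.ball x ε).Nonempty) :
    ∫ x, max (A.indicator (fun _ => (1:ℝ)) x) (S.indicator (fun _ => (1:ℝ)) x) ∂ρ
      ≤ ∫ x, ⨆ x' ∈ Metric.ball x ε, A.indicator (fun _ => (1:ℝ)) x' ∂ρ := by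
  set U : Set X := ⋃ a ∈ A, Metric.ball a ε with hU
  have hUopen : IsOpen U := isOpen_biUnion (fun _ _ => Metric.isOpen_ball)
  simp only [aux_sup_eq ε hε A]
  refine integral_mono_of_nonneg (Filter.Eventually.of_forall (fun x =>
      le_max_of_le_left (aux_ind_nonneg A x)))
    ((integrable_const (1:ℝ)).indicator hUopen.measurableSet)
    (Filter.Eventually.of_forall (fun x => ?_))
  refine max_le ?_ ?_
  · by_cases hx : x ∈ A
    · have hxU : x ∈ U := Set.mem_iUnion₂.mpr ⟨x, hx, Metric.mem_ball_self hε⟩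
      simp [Set.indicator_of_mem hx, Set.indicator_of_mem (show x ∈ ⋃ a ∈ A, Metric.ball a ε from hxU)]
    · simp [Set.indicator_of_notMem hx, aux_ind_nonneg (⋃ a ∈ A, Metric.ball a ε) x]
  · by_cases hx : x ∈ S
    · obtain ⟨a, ha, hax⟩ := hS x hx
      have hxU : x ∈ U := Set.mem_iUnion₂.mpr ⟨a, ha, by
        rw [Metric.mem_ball, dist_comm]; exact hax⟩
      calc S.indicator (fun _ => (1:ℝ)) x ≤ 1 := aux_ind_le_one S x
        _ = U.indicator (fun _ => (1:ℝ)) x := by simp [Set.indicator_of_mem hxU]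
    · simp [Set.indicator_of_notMem hx, aux_ind_nonneg (⋃ a ∈ A, Metric.ball a ε) x]

theorem stmt15 {X : Type*} [MetricSpace X] [MeasurableSpace X] [BorelSpace X]
    (m : X → Measure X) (hm : ∀ x, IsProbabilityMeasure (m x))
    (ρ₀ ρ₁ : Measure X) [IsFiniteMeasure ρ₀] [IsFiniteMeasure ρ₁]
    (ε : ℝ) (hε : 0 < ε)
    (hsupp : ∀ x, m x ((Metric.ball x ε)ᶜ) = 0)
    (A : Set X) (hA : MeasurableSet A) :
    ((∫ x, {y | 0 < m y A}.indicator (fun _ => (1:ℝ)) x ∂ρ₀)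
        + ∫ x, {y | 0 < m y Aᶜ}.indicator (fun _ => (1:ℝ)) x ∂ρ₁)
      ≤ ((∫ x, max (A.indicator (fun _ => (1:ℝ)) x)
              ({y | 0 < m y A}.indicator (fun _ => (1:ℝ)) x) ∂ρ₀)
          + ∫ x, max (Aᶜ.indicator (fun _ => (1:ℝ)) x)
              ({y | 0 < m y Aᶜ}.indicator (fun _ => (1:ℝ)) x) ∂ρ₁) ∧
    ((∫ x, max (A.indicator (fun _ => (1:ℝ)) x)
            ({y | 0 < m y A}.indicator (fun _ => (1:ℝ)) x) ∂ρ₀)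
        + ∫ x, max (Aᶜ.indicator (fun _ => (1:ℝ)) x)
            ({y | 0 < m y Aᶜ}.indicator (fun _ => (1:ℝ)) x) ∂ρ₁)
      ≤ ((∫ x, ⨆ x' ∈ Metric.ball x ε, A.indicator (fun _ => (1:ℝ)) x' ∂ρ₀)
          + ∫ x, ⨆ x' ∈ Metric.ball x ε, Aᶜ.indicator (fun _ => (1:ℝ)) x' ∂ρ₁) := by
  have key : ∀ (B : Set X) (x : X), x ∈ {y | 0 < m y B} → (B ∩ Metric.ball x ε).Nonempty := by
    intro B x hx
    have h1 : m x (B \ Metric.ball x ε) = 0 :=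
      le_antisymm (le_trans (measure_mono (Set.diff_subset_compl _ _)) (hsupp x).le)
        (zero_le)
    have h2 : m x (B ∩ Metric.ball x ε) ≠ 0 := by
      intro h0
      have := measure_le_inter_add_diff (m x) B (Metric.ball x ε)
      rw [h0, h1, add_zero] at this
      exact absurd (le_antisymm this (zero_le)) (ne_of_gt hx)
    exact MeasureTheory.nonempty_of_measure_ne_zero h2
  constructor
  · exact add_le_add (aux_part1 ρ₀ A hA _) (aux_part1 ρ₁ Aᶜ hA.compl _)
  · exact add_le_add (aux_part2 ρ₀ ε hε A _ (key A)) (aux_part2 ρ₁ ε hε Aᶜ _ (key Aᶜ))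
end
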